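/- Let N be a binary normal network on X with reticulated cherry {a,b} (reticulation leaf b), and let g_b be the grandparent of b that is not the parent of a. Then for all distinct c, c' in the visibility set V_{g_b}, the rooted triple bc|c' is not displayed by N. -/

import Mathlib

/-- A (candidate) rooted phylogenetic network structure: a directed graph on a
vertex type `V` with a distinguished root and a labelling of (intended) leaves
by elements of `X`.  The combinatorial axioms are imposed by predicates below. -/
structure Network (X : Type) where
  V : Type
  arc : V → V → Prop
  root : V
  leaf : X → V

namespace Network

variable {X : Type} (N : Network X)

def parents (v : N.V) : Set N.V := {u | N.arc u v}

def children (u : N.V) : Set N.V := {v | N.arc u v}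

/-- in-degree 1, out-degree 2 -/
def IsTreeVertex (v : N.V) : Prop := (N.parents v).ncard = 1 ∧ (N.children v).ncard = 2

/-- in-degree 2, out-degree 1 -/
def IsRetic (v : N.V) : Prop := (N.parents v).ncard = 2 ∧ (N.children v).ncard = 1

/-- in-degree 1, out-degree 0 -/
def IsLeafVertex (v : N.V) : Prop := (N.parents v).ncard = 1 ∧ (N.children v).ncard = 0

def Acyclic : Prop := ∀ v : N.V, ¬ Relation.TransGen N.arc v v

/-- A well-formed binary phylogenetic network (non-degenerate case): a finite
acyclic digraph with a root of in-degree 0 and out-degree 2, leaves of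
in-degree 1 and out-degree 0 bijectively labelled by `X`, and all remaining
vertices tree vertices or reticulations. -/
def Wf : Prop :=
  Finite N.V ∧ N.Acyclic ∧
  (N.parents N.root).ncard = 0 ∧ (N.children N.root).ncard = 2 ∧
  Function.Injective N.leaf ∧
  (∀ x : X, N.IsLeafVertex (N.leaf x)) ∧
  (∀ v : N.V, v = N.root ∨ (∃ x, N.leaf x = v) ∨ N.IsTreeVertex v ∨ N.IsRetic v)

/-- The degenerate network on a single leaf: one vertex, no arcs. -/
def Degenerate : Prop :=
  (∀ v : N.V, v = N.root) ∧ (∀ u v : N.V, ¬ N.arc u v) ∧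
  (∃! _x : X, True) ∧ (∀ x : X, N.leaf x = N.root)

def IsBinaryPhylo : Prop := N.Wf ∨ N.Degenerate

/-- `l` is a directed path (a list of successively adjacent vertices) from `u` to `v`. -/
def IsPathFromTo (l : List N.V) (u v : N.V) : Prop :=
  l.Chain' N.arc ∧ l.head? = some u ∧ l.getLast? = some v

/-- `v` is a descendant of `u` (equivalently, `u` is an ancestor of `v`). -/
def Desc (u v : N.V) : Prop := Relation.ReflTransGen N.arc u v

/-- The visibility set of `u`: those leaf labels `x` such that every directed
path from the root to the leaf labelled `x` traverses `u`. -/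
def visSet (u : N.V) : Set X :=
  {x | ∀ l : List N.V, N.IsPathFromTo l N.root (N.leaf x) → u ∈ l}

/-- The cluster set of `u`: leaf labels of leaves that are descendants of `u`. -/
def cluster (u : N.V) : Set X := {x | N.Desc u (N.leaf x)}

/-- A tree path from `u` to `t`: a directed path whose vertices other than the
endpoints are tree vertices. -/
def IsTreePath (l : List N.V) (u t : N.V) : Prop :=
  N.IsPathFromTo l u t ∧ ∀ v ∈ l, v ≠ u → v ≠ t → N.IsTreeVertex v

/-- Tree-child: every vertex with a child has a child that is a tree vertex or a leaf. -/
def TreeChild : Prop :=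
  ∀ v : N.V, (∃ c, N.arc v c) → ∃ c, N.arc v c ∧ (N.IsTreeVertex c ∨ N.IsLeafVertex c)

/-- Some reticulation arc `(u,v)` is a shortcut: there is a directed path from
`u` to `v` avoiding the arc `(u,v)`. -/
def HasShortcut : Prop :=
  ∃ u v, N.arc u v ∧ N.IsRetic v ∧ ∃ w, N.arc u w ∧ w ≠ v ∧ N.Desc w v

/-- Normal: tree-child with no shortcuts. -/
def IsNormal : Prop := N.TreeChild ∧ ¬ N.HasShortcut

def SiblingRetics (u v : N.V) : Prop :=
  u ≠ v ∧ N.IsRetic u ∧ N.IsRetic v ∧ ∃ p, N.arc p u ∧ N.arc p v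

def StackRetics (u v : N.V) : Prop :=
  N.IsRetic u ∧ N.IsRetic v ∧ N.arc u v

/-- `u` and `v` are near-sibling reticulations: some tree vertex `t` has as its
two children `v` and a tree vertex `s` that is a parent of `u`. -/
def NearSiblingRetics (u v : N.V) : Prop :=
  u ≠ v ∧ N.IsRetic u ∧ N.IsRetic v ∧
  ∃ t s, N.IsTreeVertex t ∧ N.IsTreeVertex s ∧ N.arc t s ∧ N.arc t v ∧ N.arc s u

/-- `u` and `v` are near-stack reticulations: the child of `u` is a tree vertex
that is a parent of `v`. -/
def NearStackRetics (u v : N.V) : Prop :=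
  N.IsRetic u ∧ N.IsRetic v ∧ ∃ s, N.arc u s ∧ N.IsTreeVertex s ∧ N.arc s v

def NoNearRetics : Prop :=
  (∀ u v, ¬ N.NearSiblingRetics u v) ∧ (∀ u v, ¬ N.NearStackRetics u v)

/-- `{a,b}` is a cherry: the leaves labelled `a` and `b` share a parent. -/
def Cherry (a b : X) : Prop :=
  a ≠ b ∧ ∃ p, N.arc p (N.leaf a) ∧ N.arc p (N.leaf b)

/-- `{a,b}` is a reticulated cherry with reticulation leaf `b`. -/
def ReticCherry (a b : X) : Prop :=
  a ≠ b ∧ ∃ pa pb, N.arc pa (N.leaf a) ∧ N.arc pb (N.leaf b) ∧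
    N.IsRetic pb ∧ N.arc pa pb

/-- `N` displays the rooted triple `xy|z`: there is a subdigraph of `N` that
is a subdivision of the rooted triple tree with `z` adjacent to the root,
i.e. vertices `p` (the root image) and `q` (the image of the parent of `x,y`)
together with internally disjoint directed paths as below. -/
def Displays (x y z : X) : Prop :=
  x ≠ y ∧ x ≠ z ∧ y ≠ z ∧
  ∃ (p q : N.V) (l0 lx ly lz : List N.V),
    p ≠ q ∧
    N.IsPathFromTo l0 p q ∧
    N.IsPathFromTo lx q (N.leaf x) ∧
    N.IsPathFromTo ly q (N.leaf y) ∧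
    N.IsPathFromTo lz p (N.leaf z) ∧
    (∀ v ∈ lx, v ∈ ly → v = q) ∧
    (∀ v ∈ l0, v ∈ lx ∨ v ∈ ly → v = q) ∧
    (∀ v ∈ lz, v ∈ l0 ∨ v ∈ lx ∨ v ∈ ly → v = p)

/-- `R(N)`: the set of rooted triples displayed by `N`, encoded as ordered
triples `(x, y, z)` standing for `xy|z`. -/
def RDisp : Set (X × X × X) := {t | N.Displays t.1 t.2.1 t.2.2}

/-- Isomorphism of networks on the same leaf set: a digraph isomorphism fixing
each leaf label. -/
def Isomorphic (N1 N2 : Network X) : Prop :=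
  ∃ φ : N1.V ≃ N2.V,
    (∀ u v, N1.arc u v ↔ N2.arc (φ u) (φ v)) ∧ (∀ x, φ (N1.leaf x) = N2.leaf x)

/-- A candidate set for `b` (relative to `a`): a non-empty subset
`W ⊆ X - {a,b}` satisfying conditions (W1)–(W5). -/
def CandidateSet (a b : X) (W : Set X) : Prop :=
  W.Nonempty ∧ a ∉ W ∧ b ∉ W ∧
  -- (W1)
  (∀ c ∈ W, ∀ x : X, x ∉ W → x ≠ b →
    N.Displays b c x ∧ ¬ N.Displays a c b) ∧
  -- (W2)
  (∀ c ∈ W, ∀ c' ∈ W, c ≠ c' → ¬ N.Displays b c c') ∧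
  -- (W3)
  (∀ c ∈ W, ∀ x : X, x ∉ W → x ≠ a → x ≠ b →
    (N.Displays c x a ↔ N.Displays b x a)) ∧
  -- (W4)
  (∀ x y : X, x ∉ W → x ≠ a → x ≠ b → y ∉ W → y ≠ a → y ≠ b →
    N.Displays b x y → ¬ N.Displays a x y → ∀ c ∈ W, N.Displays c x y) ∧
  -- (W5)
  (∀ c ∈ W, (∀ x : X, x ∉ W → x ≠ a → x ≠ b → N.Displays a c x) →
    ∀ x : X, x ∉ W → x ≠ a → x ≠ b → ¬ N.Displays a x c ∧ ¬ N.Displays a x b)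

end Network


/-! The embedded path from `q` (the image of the common parent of `b` and `c`) to `b` enters the
reticulation `p_b` through one of its two parents. Through `g_b` is impossible: `g_b` would lie
strictly below the image `p` of the triple's root, while every root-to-`c'` path, which can be
routed through `p` and then along the branch to `c'`, has to meet `g_b`. Through `p_a` is
impossible too: as `c` and `c'` are both visible from `g_b`, `g_b` is an ancestor of `q` and hence
of `p_a`, which makes the arc `g_b → p_b` a shortcut. -/

namespace Network

variable {X : Type} {N : Network X}

section Paths

variable {l l₁ l₂ : List N.V} {u v w x : N.V}

theorem IsPathFromTo.head_mem (h : N.IsPathFromTo l u v) : u ∈ l :=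
  List.mem_of_mem_head? h.2.1

theorem IsPathFromTo.last_mem (h : N.IsPathFromTo l u v) : v ∈ l :=
  List.mem_of_mem_getLast? h.2.2

theorem IsPathFromTo.desc_of_mem (h : N.IsPathFromTo l u v) (hx : x ∈ l) : N.Desc u x := by
  refine List.IsChain.induction (N.Desc u) l h.1 (fun _ _ hyz hy => hy.tail hyz) ?_ x hx
  intro hne
  rw [(List.head_eq_iff_head?_eq_some hne).mpr h.2.1]
  exact Relation.ReflTransGen.refl

theorem IsPathFromTo.desc_to_of_mem (h : N.IsPathFromTo l u v) (hx : x ∈ l) :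
    N.Desc x v := by
  refine List.IsChain.backwards_induction (N.Desc · v) l h.1 (fun _ _ hyz hz => hz.head hyz)
    ?_ x hx
  intro hne
  rw [(List.getLast_eq_iff_getLast?_eq_some hne).mpr h.2.2]
  exact Relation.ReflTransGen.refl

theorem IsPathFromTo.desc (h : N.IsPathFromTo l u v) : N.Desc u v :=
  h.desc_of_mem h.last_mem

theorem IsPathFromTo.exists_arc_mem (h : N.IsPathFromTo l u v) (hx : x ∈ l) (hxu : x ≠ u) :
    ∃ z ∈ l, N.arc z x := by
  obtain ⟨l, rfl⟩ := List.head?_eq_some_iff.mp h.2.1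
  have hc : (u :: l).IsChain N.arc := h.1
  clear h
  induction l generalizing u with
  | nil => simp_all
  | cons y l ih =>
    obtain ⟨huy, hc⟩ := List.isChain_cons_cons.mp hc
    by_cases hxy : x = y
    · exact ⟨u, List.mem_cons_self, hxy ▸ huy⟩
    · obtain ⟨z, hz, hzx⟩ := ih hxy ((List.mem_cons.mp hx).resolve_left hxu) hc
      exact ⟨z, List.mem_cons_of_mem _ hz, hzx⟩

theorem IsPathFromTo.append (h₁ : N.IsPathFromTo l₁ u v) (h₂ : N.IsPathFromTo l₂ v w) :
    N.IsPathFromTo (l₁ ++ l₂.tail) u w := by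
  obtain ⟨t, rfl⟩ := List.head?_eq_some_iff.mp h₂.2.1
  have hc : (v :: t).IsChain N.arc := h₂.1
  refine ⟨List.IsChain.append h₁.1 hc.tail ?_, by simp [List.head?_append, h₁.2.1], ?_⟩
  · intro x hx y hy
    rw [h₁.2.2, Option.mem_some_iff] at hx
    exact hx ▸ hc.rel_head? hy
  · cases t with
    | nil => simpa [List.getLast?_append, h₁.2.2] using h₂.2.2
    | cons y t => simpa [List.getLast?_append] using h₂.2.2

theorem exists_isPathFromTo_of_desc (h : N.Desc u v) : ∃ l, N.IsPathFromTo l u v := by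
  obtain ⟨l, hl, hlast⟩ := List.exists_isChain_cons_of_relationReflTransGen h
  exact ⟨u :: l, hl, rfl, by rw [List.getLast?_eq_getLast_of_ne_nil (List.cons_ne_nil _ _), hlast]⟩

end Paths

theorem desc_or_mem_of_mem_visSet {l : List N.V} {u g : N.V} {x : X}
    (hu : N.Desc N.root u) (hl : N.IsPathFromTo l u (N.leaf x)) (hx : x ∈ N.visSet g) :
    N.Desc g u ∨ g ∈ l := by
  obtain ⟨r, hr⟩ := exists_isPathFromTo_of_desc hu
  rcases List.mem_append.mp (hx _ (hr.append hl)) with hg | hg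
  · exact Or.inl (hr.desc_to_of_mem hg)
  · exact Or.inr (List.mem_of_mem_tail hg)

theorem IsRetic.eq_or_eq_of_arc {u u' v w : N.V} (hv : N.IsRetic v) (hne : u ≠ u')
    (hu : N.arc u v) (hu' : N.arc u' v) (hw : N.arc w v) : w = u ∨ w = u' := by
  have hfin : (N.parents v).Finite := Set.finite_of_ncard_ne_zero (by rw [hv.1]; norm_num)
  have hpair : {u, u'} = N.parents v :=
    Set.eq_of_subset_of_ncard_le (Set.insert_subset hu (Set.singleton_subset_iff.mpr hu'))
      (by rw [hv.1, Set.ncard_pair hne]) hfin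
  simpa [← hpair] using (show w ∈ N.parents v from hw)

theorem not_transGen_of_arc_of_isRetic {u u' v : N.V} (hacyc : N.Acyclic)
    (hs : ¬ N.HasShortcut) (hv : N.IsRetic v) (hu : N.arc u v) (hu' : N.arc u' v) :
    ¬ Relation.TransGen N.arc u u' := by
  intro huu'
  obtain ⟨w, huw, hwu'⟩ := Relation.TransGen.head'_iff.mp huu'
  by_cases hwv : w = v
  · exact hacyc v (Relation.TransGen.tail' (hwv ▸ hwu') hu')
  · exact hs ⟨u, v, hu, hv, w, huw, hwv, hwu'.tail hu'⟩

theorem IsBinaryPhylo.wf_of_arc {u v : N.V} (h : N.IsBinaryPhylo) (huv : N.arc u v) : N.Wf :=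
  h.resolve_right fun hdeg => hdeg.2.1 u v huv

namespace Wf

variable {u u' v : N.V} {x y : X}

theorem desc_root (hwf : N.Wf) (v : N.V) : N.Desc N.root v := by
  obtain ⟨hfin, hacyc, -, -, -, hleaf, hclass⟩ := hwf
  have : Std.Irrefl (Relation.TransGen N.arc) := ⟨hacyc⟩
  have hwfa : WellFounded N.arc :=
    Subrelation.wf Relation.TransGen.single (Finite.wellFounded_of_trans_of_irrefl _)
  induction v using hwfa.induction with
  | _ v ih =>
    rcases hclass v with rfl | hv
    · exact Relation.ReflTransGen.refl
    · have hpar : (N.parents v).ncard ≠ 0 := by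
        rcases hv with ⟨x, rfl⟩ | hv | hv
        exacts [by rw [(hleaf x).1]; norm_num, by rw [hv.1]; norm_num, by rw [hv.1]; norm_num]
      obtain ⟨z, hz⟩ := Set.nonempty_of_ncard_ne_zero hpar
      exact (ih z hz).tail hz

theorem not_arc_leaf (hwf : N.Wf) (x : X) (w : N.V) : ¬ N.arc (N.leaf x) w := by
  obtain ⟨hfin, -, -, -, -, hleaf, -⟩ := hwf
  have hempty : N.children (N.leaf x) = ∅ := (Set.ncard_eq_zero).mp (hleaf x).2
  exact fun hw => (hempty ▸ hw : w ∈ (∅ : Set N.V))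

theorem eq_of_desc_leaf (hwf : N.Wf) (h : N.Desc (N.leaf x) v) : v = N.leaf x := by
  rcases h.cases_head with rfl | ⟨w, hw, -⟩
  · rfl
  · exact absurd hw (hwf.not_arc_leaf x w)

theorem eq_of_arc_leaf (hwf : N.Wf) (hu : N.arc u (N.leaf x)) (hu' : N.arc u' (N.leaf x)) :
    u = u' := by
  obtain ⟨hfin, -, -, -, -, hleaf, -⟩ := hwf
  exact (Set.ncard_le_one_iff (Set.toFinite _)).mp (hleaf x).1.le hu hu'

theorem eq_of_desc_leaf_of_isRetic (hwf : N.Wf) (hv : N.IsRetic v) (hvx : N.arc v (N.leaf x))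
    (hvy : N.Desc v (N.leaf y)) : y = x := by
  rcases hvy.cases_head with hyv | ⟨w, hvw, hwy⟩
  · exact absurd (hyv ▸ hvx) (hwf.not_arc_leaf y _)
  · have hw : w = N.leaf x := by
      have := hwf.1
      exact (Set.ncard_le_one_iff (Set.toFinite _)).mp hv.2.le hvw hvx
    exact hwf.2.2.2.2.1 (hwf.eq_of_desc_leaf (hw ▸ hwy))

theorem exists_arc_mem_of_isRetic {l : List N.V} (hwf : N.Wf) (hv : N.IsRetic v)
    (hvx : N.arc v (N.leaf x)) (hl : N.IsPathFromTo l u (N.leaf x)) (huy : N.Desc u (N.leaf y))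
    (hyx : y ≠ x) : ∃ z ∈ l, N.arc z v := by
  have hvu : v ≠ u := fun h => hyx (hwf.eq_of_desc_leaf_of_isRetic hv hvx (h ▸ huy))
  have hxu : N.leaf x ≠ u := fun h =>
    hyx (hwf.eq_of_desc_leaf_of_isRetic hv hvx (.head hvx (h ▸ huy)))
  obtain ⟨z, hz, hzx⟩ := hl.exists_arc_mem hl.last_mem hxu
  obtain rfl := hwf.eq_of_arc_leaf hzx hvx
  exact hl.exists_arc_mem hz hvu

end Wf

/-- The witness of `Network.Displays x y z`, bundled. -/
structure TripleEmbedding (N : Network X) (x y z : X) where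
  p : N.V
  q : N.V
  l0 : List N.V
  lx : List N.V
  ly : List N.V
  lz : List N.V
  p_ne_q : p ≠ q
  path_pq : N.IsPathFromTo l0 p q
  path_x : N.IsPathFromTo lx q (N.leaf x)
  path_y : N.IsPathFromTo ly q (N.leaf y)
  path_z : N.IsPathFromTo lz p (N.leaf z)
  disjoint_xy : ∀ v ∈ lx, v ∈ ly → v = q
  disjoint_pq : ∀ v ∈ l0, v ∈ lx ∨ v ∈ ly → v = q
  disjoint_z : ∀ v ∈ lz, v ∈ l0 ∨ v ∈ lx ∨ v ∈ ly → v = p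

theorem Displays.nonempty_tripleEmbedding {x y z : X} (h : N.Displays x y z) :
    Nonempty (N.TripleEmbedding x y z) := by
  obtain ⟨-, -, -, p, q, l0, lx, ly, lz, hpq, h0, hx, hy, hz, hxy, h0xy, hzxy⟩ := h
  exact ⟨⟨p, q, l0, lx, ly, lz, hpq, h0, hx, hy, hz, hxy, h0xy, hzxy⟩⟩

namespace TripleEmbedding

variable {x y z : X} {g : N.V} (E : N.TripleEmbedding x y z)

theorem desc_q_of_mem_visSet (hroot : ∀ v, N.Desc N.root v) (hy : y ∈ N.visSet g)
    (hz : z ∈ N.visSet g) : N.Desc g E.q := by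
  rcases desc_or_mem_of_mem_visSet (hroot _) E.path_z hz with hgp | hgz
  · exact hgp.trans E.path_pq.desc
  rcases desc_or_mem_of_mem_visSet (hroot _) E.path_y hy with hgq | hgy
  · exact hgq
  · exact E.disjoint_z g hgz (Or.inr (Or.inr hgy)) ▸ E.path_pq.desc

theorem not_mem_lx_of_mem_visSet (hacyc : N.Acyclic) (hroot : ∀ v, N.Desc N.root v)
    (hz : z ∈ N.visSet g) : g ∉ E.lx := by
  intro hgx
  rcases desc_or_mem_of_mem_visSet (hroot _) E.path_z hz with hgp | hgz
  · have hpq : Relation.TransGen N.arc E.p E.q :=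
      (Relation.reflTransGen_iff_eq_or_transGen.mp E.path_pq.desc).resolve_left E.p_ne_q.symm
    exact hacyc _ (hpq.trans_left ((E.path_x.desc_of_mem hgx).trans hgp))
  · have hgp : g = E.p := E.disjoint_z g hgz (Or.inr (Or.inl hgx))
    exact E.p_ne_q (E.disjoint_pq _ E.path_pq.head_mem (Or.inl (hgp ▸ hgx)))

end TripleEmbedding

end Network

theorem vgb_property_iii_general {X : Type} (N : Network X)
    (h : N.IsBinaryPhylo) (hn : N.IsNormal) (b : X)
    (pa pb gb : N.V)
    (hpb : N.arc pb (N.leaf b))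
    (hretic : N.IsRetic pb) (hpapb : N.arc pa pb) (hgbpb : N.arc gb pb)
    (hgbpa : gb ≠ pa) :
    ∀ c ∈ N.visSet gb, ∀ c' ∈ N.visSet gb, c ≠ c' → ¬ N.Displays b c c' := by
  intro c hc c' hc' _ hdisp
  have hwf := h.wf_of_arc hpapb
  obtain ⟨E⟩ := hdisp.nonempty_tripleEmbedding
  obtain ⟨z, hz, hzpb⟩ :=
    hwf.exists_arc_mem_of_isRetic hretic hpb E.path_x E.path_y.desc hdisp.1.symm
  rcases hretic.eq_or_eq_of_arc hgbpa.symm hpapb hgbpb hzpb with hzpa | hzgb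
  · have hgb_pa : N.Desc gb pa :=
      (E.desc_q_of_mem_visSet hwf.desc_root hc hc').trans (E.path_x.desc_of_mem (hzpa ▸ hz))
    exact Network.not_transGen_of_arc_of_isRetic hwf.2.1 hn.2 hretic hgbpb hpapb
      ((Relation.reflTransGen_iff_eq_or_transGen.mp hgb_pa).resolve_left hgbpa.symm)
  · exact E.not_mem_lx_of_mem_visSet hwf.2.1 hwf.desc_root hc' (hzgb ▸ hz)

/-- Lemma (iii): for a reticulated cherry `{a,b}` with reticulation leaf `b` in
a binary normal network `N`, with `g_b` the grandparent of `b` other than the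
parent `p_a` of `a`: for all distinct `c, c' ∈ V_{g_b}`, `N` does not display
`bc|c'`. -/
theorem vgb_property_iii {X : Type} (N : Network X)
    (h : N.IsBinaryPhylo) (hn : N.IsNormal) (a b : X) (hab : a ≠ b)
    (pa pb gb : N.V)
    (hpa : N.arc pa (N.leaf a)) (hpb : N.arc pb (N.leaf b))
    (hretic : N.IsRetic pb) (hpapb : N.arc pa pb) (hgbpb : N.arc gb pb)
    (hgbpa : gb ≠ pa) :
    ∀ c ∈ N.visSet gb, ∀ c' ∈ N.visSet gb, c ≠ c' → ¬ N.Displays b c c' :=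
  vgb_property_iii_general N h hn b pa pb gb hpb hretic hpapb hgbpb hgbpa
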